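/- Under the assumptions of the previous statement, suppose additionally that π maximizes the adjusted objective: ∑_s ρ^π(s)(r(s) + σ₋(s) − σ₊(s)) ≥ ∑_s ρ^{π'}(s)(r(s) + σ₋(s) − σ₊(s)) for the given feasible π'. Then ∑_s ρ^π(s) r(s) ≥ ∑_s ρ^{π'}(s) r(s). -/
import Mathlib

open Finset

theorem stmt_8 {S : Type*} [Fintype S]
    (r ρπ ρπ' ρmin ρmax σp σm : S → ℝ)
    (hσp : ∀ s, 0 ≤ σp s) (hσm : ∀ s, 0 ≤ σm s)
    (hcs_m : ∀ s, σm s * (ρmin s - ρπ s) = 0)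
    (hcs_p : ∀ s, σp s * (ρπ s - ρmax s) = 0)
    (hfeas : ∀ s, ρmin s ≤ ρπ' s ∧ ρπ' s ≤ ρmax s)
    (hopt : ∑ s, ρπ' s * (r s + σm s - σp s) ≤ ∑ s, ρπ s * (r s + σm s - σp s)) :
    ∑ s, ρπ' s * r s ≤ ∑ s, ρπ s * r s := by
  have h1 : ∑ s, ρπ' s * r s ≤
      ∑ s, (ρπ' s * (r s + σm s - σp s) + (σp s * ρmax s - σm s * ρmin s)) := by
    apply Finset.sum_le_sum
    intro s _
    have h2 : σp s * (ρπ' s - ρmax s) ≤ 0 :=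
      mul_nonpos_of_nonneg_of_nonpos (hσp s) (by linarith [(hfeas s).2])
    have h3 : σm s * (ρmin s - ρπ' s) ≤ 0 :=
      mul_nonpos_of_nonneg_of_nonpos (hσm s) (by linarith [(hfeas s).1])
    nlinarith [h2, h3]
  have h4 : ∑ s, (ρπ s * (r s + σm s - σp s) + (σp s * ρmax s - σm s * ρmin s))
      = ∑ s, ρπ s * r s := by
    apply Finset.sum_congr rfl
    intro s _
    have := hcs_m s
    have := hcs_p s
    nlinarith [hcs_m s, hcs_p s]
  calc ∑ s, ρπ' s * r s
      ≤ ∑ s, (ρπ' s * (r s + σm s - σp s) + (σp s * ρmax s - σm s * ρmin s)) := h1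
    _ ≤ ∑ s, (ρπ s * (r s + σm s - σp s) + (σp s * ρmax s - σm s * ρmin s)) := by
        rw [Finset.sum_add_distrib, Finset.sum_add_distrib]; linarith
    _ = ∑ s, ρπ s * r s := h4
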